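/- Fix d ≥ 1 and p : Fin d × Fin d → ℝ with p_{ji} ≥ 0 and Σ_{j,i} p_{ji} = 1; set q_j := Σ_i p_{ji}, π_i := Σ_j p_{ji}, assume q_j > 0 and π_i > 0 for all i, j, and set ρ_{ji} := p_{ji}/π_i. Fix ν ∈ S^{d-1} and define f^i(μ) = (Σ_j (μ^j/ν^j) p_{ji}) / (Σ_j (μ^j/ν^j) q_j) on the positive orthant. Write D²f(ν)·v for the second directional derivative of f at ν along v (the derivative of μ ↦ Df(μ)·v at ν in direction v). Then for all v, w ∈ ℝ^d with Σ_j v^j = Σ_j w^j = 0: Σ_i |(D²f(ν)·v)^i − (D²f(ν)·w)^i| ≤ 2 (Σ_k |v^k + w^k|/ν^k)(Σ_j |v^j − w^j|/ν^j) · max_{j,k,ℓ} |ρ_{jk} − ρ_{jℓ}|. -/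

import Mathlib

noncomputable def linCLM {d : ℕ} (c : Fin d → ℝ) : (Fin d → ℝ) →L[ℝ] ℝ :=
  ∑ j, c j • (ContinuousLinearMap.proj j : (Fin d → ℝ) →L[ℝ] ℝ)

lemma linCLM_apply {d : ℕ} (c μ : Fin d → ℝ) : linCLM c μ = ∑ j, c j * μ j := by
  simp [linCLM]

lemma hasFDerivAt_div'' {E : Type*} [NormedAddCommGroup E] [NormedSpace ℝ E]
    {c d : E → ℝ} {c' d' : E →L[ℝ] ℝ} {x : E}
    (hc : HasFDerivAt c c' x) (hd : HasFDerivAt d d' x) (hx : d x ≠ 0) :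
    HasFDerivAt (fun y => c y / d y) ((1 / d x ^ 2) • (d x • c' - c x • d')) x := by
  have h := hc.mul ((hasDerivAt_inv hx).comp_hasFDerivAt x hd)
  have heq : (fun y => c y / d y) = fun y => c y * (Inv.inv ∘ d) y := by
    funext y; simp [div_eq_mul_inv, Function.comp]
  rw [heq]
  refine h.congr_fderiv ?_
  ext y
  simp only [ContinuousLinearMap.smul_apply, ContinuousLinearMap.sub_apply,
    ContinuousLinearMap.add_apply, Function.comp, smul_eq_mul]
  field_simp
  ring

lemma second_deriv_formula' {d : ℕ} (A : Fin d → (Fin d → ℝ) →L[ℝ] ℝ)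
    (B : (Fin d → ℝ) →L[ℝ] ℝ) (f : (Fin d → ℝ) → Fin d → ℝ)
    (hf : ∀ μ i, f μ i = A i μ / B μ) (ν : Fin d → ℝ) (hB : B ν = 1)
    (v : Fin d → ℝ) (i : Fin d) :
    fderiv ℝ (fun μ' => fderiv ℝ f μ' v) ν v i
      = -2 * (A i v - A i ν * B v) * B v := by
  obtain rfl : f = fun μ i => A i μ / B μ := funext fun μ => funext (hf μ)
  have hBne : ∀ᶠ μ' in nhds ν, B μ' ≠ 0 :=
    B.continuous.continuousAt.eventually_ne (by rw [hB]; exact one_ne_zero)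
  have hfd : ∀ μ', B μ' ≠ 0 → HasFDerivAt (fun μ (i : Fin d) => A i μ / B μ)
      (ContinuousLinearMap.pi fun i => ((1 : ℝ) / B μ' ^ 2) • (B μ' • A i - A i μ' • B)) μ' := by
    intro μ' h
    exact hasFDerivAt_pi.2 fun i => hasFDerivAt_div'' (A i).hasFDerivAt B.hasFDerivAt h
  set g : (Fin d → ℝ) → Fin d → ℝ :=
    fun μ' i => (B μ' * A i v - A i μ' * B v) / (B μ' * B μ') with hgdef
  have heq : (fun μ' => fderiv ℝ (fun μ (i : Fin d) => A i μ / B μ) μ' v) =ᶠ[nhds ν] g := by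
    filter_upwards [hBne] with μ' h
    rw [(hfd μ' h).fderiv]
    funext i
    simp only [hgdef, ContinuousLinearMap.pi_apply, ContinuousLinearMap.smul_apply,
      ContinuousLinearMap.sub_apply, smul_eq_mul]
    ring
  rw [heq.fderiv_eq]
  have hnum : ∀ i : Fin d, HasFDerivAt (fun μ' => B μ' * A i v - A i μ' * B v)
      ((A i v) • B - (B v) • A i) ν :=
    fun i => (B.hasFDerivAt.mul_const (A i v)).sub ((A i).hasFDerivAt.mul_const (B v))
  have hden : HasFDerivAt (fun μ' => B μ' * B μ') (B ν • B + B ν • B) ν :=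
    B.hasFDerivAt.mul B.hasFDerivAt
  have hg2 : HasFDerivAt g (ContinuousLinearMap.pi fun i =>
      ((1 : ℝ) / (B ν * B ν) ^ 2) • ((B ν * B ν) • ((A i v) • B - (B v) • A i) -
        (B ν * A i v - A i ν * B v) • (B ν • B + B ν • B))) ν :=
    hasFDerivAt_pi.2 fun i => hasFDerivAt_div'' (hnum i) hden (by rw [hB]; norm_num)
  rw [hg2.fderiv]
  simp only [ContinuousLinearMap.pi_apply, ContinuousLinearMap.smul_apply,
    ContinuousLinearMap.sub_apply, ContinuousLinearMap.add_apply, smul_eq_mul, hB]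
  ring

/-- Core of Lemma 4.3: bound on the difference of second directional derivatives
of the filter with respect to its initial condition. -/
theorem filter_second_derivative_difference_bound
    (d : ℕ) (hd : 1 ≤ d) (p : Fin d → Fin d → ℝ)
    (hp : ∀ j i, 0 ≤ p j i) (hpsum : ∑ j, ∑ i, p j i = 1)
    (q : Fin d → ℝ) (hq : ∀ j, q j = ∑ i, p j i) (hqpos : ∀ j, 0 < q j)
    (π : Fin d → ℝ) (hπ : ∀ i, π i = ∑ j, p j i) (hπpos : ∀ i, 0 < π i)
    (ρ : Fin d → Fin d → ℝ) (hρ : ∀ j i, ρ j i = p j i / π i)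
    (ν : Fin d → ℝ) (hν : ∀ i, 0 < ν i) (hνsum : ∑ i, ν i = 1)
    (f : (Fin d → ℝ) → Fin d → ℝ)
    (hf : ∀ μ i, f μ i =
      (∑ j, (μ j / ν j) * p j i) / (∑ j, (μ j / ν j) * q j))
    (v w : Fin d → ℝ) (hv : ∑ j, v j = 0) (hw : ∑ j, w j = 0) :
    ∑ i, |fderiv ℝ (fun μ' => fderiv ℝ f μ' v) ν v i -
          fderiv ℝ (fun μ' => fderiv ℝ f μ' w) ν w i| ≤
      2 * (∑ k, |v k + w k| / ν k) * (∑ j, |v j - w j| / ν j) *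
        ⨆ x : Fin d × Fin d × Fin d, |ρ x.1 x.2.1 - ρ x.1 x.2.2| := by
  have hνne : ∀ j, ν j ≠ 0 := fun j => (hν j).ne'
  set A : Fin d → (Fin d → ℝ) →L[ℝ] ℝ := fun i => linCLM (fun j => p j i / ν j) with hA
  set B : (Fin d → ℝ) →L[ℝ] ℝ := linCLM (fun j => q j / ν j) with hB
  have hfAB : ∀ μ i, f μ i = A i μ / B μ := by
    intro μ i
    rw [hf, hA, hB, linCLM_apply, linCLM_apply]
    congr 1 <;> exact Finset.sum_congr rfl fun j _ => by ring
  have hqsum : ∑ j, q j = 1 := by rw [← hpsum]; exact Finset.sum_congr rfl fun j _ => hq j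
  have hπsum : ∑ i, π i = 1 := by
    rw [← hpsum, Finset.sum_comm]; exact Finset.sum_congr rfl fun i _ => hπ i
  have hBν : B ν = 1 := by
    rw [hB, linCLM_apply, ← hqsum]
    exact Finset.sum_congr rfl fun j _ => div_mul_cancel₀ _ (hνne j)
  have hAν : ∀ i, A i ν = π i := by
    intro i
    rw [hA, linCLM_apply, hπ]
    exact Finset.sum_congr rfl fun j _ => div_mul_cancel₀ _ (hνne j)
  have key : ∀ u i, fderiv ℝ (fun μ' => fderiv ℝ f μ' u) ν u i
      = -2 * (A i u - π i * B u) * B u := by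
    intro u i
    rw [second_deriv_formula' A B f hfAB ν hBν u i, hAν]
  haveI : Nonempty (Fin d) := ⟨⟨0, hd⟩⟩
  set M : ℝ := ⨆ x : Fin d × Fin d × Fin d, |ρ x.1 x.2.1 - ρ x.1 x.2.2| with hMdef
  have hMb : BddAbove (Set.range fun x : Fin d × Fin d × Fin d => |ρ x.1 x.2.1 - ρ x.1 x.2.2|) :=
    Set.Finite.bddAbove (Set.finite_range _)
  have hM : ∀ j k l, |ρ j k - ρ j l| ≤ M := fun j k l => le_ciSup hMb (j, k, l)
  have hM0 : (0 : ℝ) ≤ M := by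
    have := hM ⟨0, hd⟩ ⟨0, hd⟩ ⟨0, hd⟩
    simpa using this
  -- q j = ∑ l, π l * ρ j l
  have hρq : ∀ j, q j = ∑ l, π l * ρ j l := by
    intro j
    rw [hq]
    exact Finset.sum_congr rfl fun l _ => by
      rw [hρ, mul_comm (π l), div_mul_cancel₀ _ (hπpos l).ne']
  have hgap : ∀ j i, |ρ j i - q j| ≤ M := by
    intro j i
    have : ρ j i - q j = ∑ l, π l * (ρ j i - ρ j l) := by
      rw [hρq j]
      rw [Finset.sum_congr rfl fun l (_ : l ∈ Finset.univ) =>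
        (mul_sub (π l) (ρ j i) (ρ j l)), Finset.sum_sub_distrib, ← Finset.sum_mul, hπsum]
      ring
    rw [this]
    calc |∑ l, π l * (ρ j i - ρ j l)| ≤ ∑ l, |π l * (ρ j i - ρ j l)| :=
          Finset.abs_sum_le_sum_abs _ _
      _ ≤ ∑ l, π l * M := by
          apply Finset.sum_le_sum
          intro l _
          rw [abs_mul, abs_of_pos (hπpos l)]
          exact mul_le_mul_of_nonneg_left (hM j i l) (hπpos l).le
      _ = M := by rw [← Finset.sum_mul, hπsum, one_mul]
  have central : ∀ u i, A i u - π i * B u = ∑ j, (u j / ν j) * π i * (ρ j i - q j) := by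
    intro u i
    rw [hA, hB, linCLM_apply, linCLM_apply, Finset.mul_sum, ← Finset.sum_sub_distrib]
    apply Finset.sum_congr rfl
    intro j _
    have hpρ : p j i = π i * ρ j i := by
      rw [hρ, mul_comm (π i), div_mul_cancel₀ _ (hπpos i).ne']
    rw [hpρ]
    field_simp
  have bound1 : ∀ u, ∑ i, |A i u - π i * B u| ≤ (∑ j, |u j| / ν j) * M := by
    intro u
    calc ∑ i, |A i u - π i * B u| ≤ ∑ i, ∑ j, π i * ((|u j| / ν j) * M) := by
          apply Finset.sum_le_sum
          intro i _
          rw [central u i]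
          refine (Finset.abs_sum_le_sum_abs _ _).trans (Finset.sum_le_sum fun j _ => ?_)
          rw [abs_mul, abs_mul, abs_div, abs_of_pos (hν j), abs_of_pos (hπpos i)]
          have h1 : |u j| / ν j * π i * |ρ j i - q j| ≤ |u j| / ν j * π i * M := by
            exact mul_le_mul_of_nonneg_left (hgap j i)
              (mul_nonneg (div_nonneg (abs_nonneg _) (hν j).le) (hπpos i).le)
          linarith [h1]
      _ = ∑ i, π i * ((∑ j, |u j| / ν j) * M) := by
          apply Finset.sum_congr rfl
          intro i _
          rw [← Finset.mul_sum, ← Finset.sum_mul]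
      _ = (∑ j, |u j| / ν j) * M := by rw [← Finset.sum_mul, hπsum, one_mul]
  have hq1 : ∀ j, q j ≤ 1 := by
    intro j
    rw [← hqsum]
    exact Finset.single_le_sum (fun l _ => (hqpos l).le) (Finset.mem_univ j)
  have bound2 : ∀ u, |B u| ≤ ∑ j, |u j| / ν j := by
    intro u
    rw [hB, linCLM_apply]
    refine (Finset.abs_sum_le_sum_abs _ _).trans (Finset.sum_le_sum fun j _ => ?_)
    rw [abs_mul, abs_div, abs_of_pos (hν j), abs_of_pos (hqpos j), div_mul_eq_mul_div,
      div_le_div_iff_of_pos_right (hν j)]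
    calc q j * |u j| ≤ 1 * |u j| := mul_le_mul_of_nonneg_right (hq1 j) (abs_nonneg _)
      _ = |u j| := one_mul _
  set s : Fin d → ℝ := fun k => v k + w k with hsdef
  set t : Fin d → ℝ := fun k => v k - w k with htdef
  have hsv : s = v + w := rfl
  have htv : t = v - w := rfl
  have pointwise : ∀ i, fderiv ℝ (fun μ' => fderiv ℝ f μ' v) ν v i -
      fderiv ℝ (fun μ' => fderiv ℝ f μ' w) ν w i =
      -((A i s - π i * B s) * B t + (A i t - π i * B t) * B s) := by
    intro i
    rw [key v i, key w i, hsv, htv, map_add, map_sub, map_add, map_sub]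
    ring
  have Ss0 : (0 : ℝ) ≤ ∑ k, |s k| / ν k :=
    Finset.sum_nonneg fun k _ => div_nonneg (abs_nonneg _) (hν k).le
  have St0 : (0 : ℝ) ≤ ∑ k, |t k| / ν k :=
    Finset.sum_nonneg fun k _ => div_nonneg (abs_nonneg _) (hν k).le
  calc ∑ i, |fderiv ℝ (fun μ' => fderiv ℝ f μ' v) ν v i -
          fderiv ℝ (fun μ' => fderiv ℝ f μ' w) ν w i|
      ≤ ∑ i, (|A i s - π i * B s| * |B t| + |A i t - π i * B t| * |B s|) := by
        apply Finset.sum_le_sum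
        intro i _
        rw [pointwise i, abs_neg]
        exact (abs_add_le _ _).trans (by rw [abs_mul, abs_mul])
    _ = (∑ i, |A i s - π i * B s|) * |B t| + (∑ i, |A i t - π i * B t|) * |B s| := by
        rw [Finset.sum_add_distrib, Finset.sum_mul, Finset.sum_mul]
    _ ≤ ((∑ k, |s k| / ν k) * M) * (∑ k, |t k| / ν k) +
        ((∑ k, |t k| / ν k) * M) * (∑ k, |s k| / ν k) := by
        refine add_le_add ?_ ?_
        · exact mul_le_mul (bound1 s) (bound2 t) (abs_nonneg _) (mul_nonneg Ss0 hM0)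
        · exact mul_le_mul (bound1 t) (bound2 s) (abs_nonneg _) (mul_nonneg St0 hM0)
    _ = 2 * (∑ k, |v k + w k| / ν k) * (∑ j, |v j - w j| / ν j) * M := by
        ring
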